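/- Let Ω be as above, let α = (2·C(N,2))^{-1/2} and β = (6·C(N,2))^{-1/2}, and define vectors u_α, u_β ∈ R^{3·C(N,2)} by u_α(v_{ij}^1) = α, u_α(v_{ij}^2) = 0, u_α(v_{ij}^3) = -α, and u_β(v_{ij}^1) = β, u_β(v_{ij}^2) = -2β, u_β(v_{ij}^3) = β for all i < j. Then u_α and u_β are orthogonal unit eigenvectors of Ω corresponding to the eigenvalue 4(N-2). -/

import Mathlib

/-!
`Ω` is the Kronecker product of the adjacency matrix of the Johnson graph `J(N, 2)` with the
`3 × 3` matrix having `1` on the diagonal and `-1` off it. The Johnson graph is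
`2(N - 2)`-regular: a 2-subset meeting a fixed 2-subset `s` in one point is `{a, b}` with `a ∈ s`
and `b ∉ s`. The sign matrix acts as `2` on color vectors with coordinate sum `0`, so every such
color vector, spread constantly over the pairs, is an eigenvector for `2(N - 2) · 2`. Dot products
of such vectors are `C(N, 2)` times the dot products of the color vectors.
-/

open Matrix

/-- Index set of pairs `(i,j)` with `i < j` in `[N]`. -/
def PairIdx (N : ℕ) := {p : Fin N × Fin N // p.1 < p.2}

instance (N : ℕ) : Fintype (PairIdx N) := by unfold PairIdx; infer_instance
instance (N : ℕ) : DecidableEq (PairIdx N) := by unfold PairIdx; infer_instance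

/-- The signed adjacency matrix `Ω` on vertices `v_{ij}^m`. -/
def OmegaMat (N : ℕ) : Matrix (PairIdx N × Fin 3) (PairIdx N × Fin 3) ℝ :=
  fun v w =>
    if (({v.1.val.1, v.1.val.2} : Finset (Fin N)) ∩ {w.1.val.1, w.1.val.2}).card = 1 then
      (if v.2 = w.2 then 1 else -1)
    else 0

open Finset
open scoped Kronecker

section TwoSubsets

variable {α : Type*} [DecidableEq α]

theorem Finset.pair_eq_pair_iff {x y z w : α} :
    ({x, y} : Finset α) = {z, w} ↔ x = z ∧ y = w ∨ x = w ∧ y = z := by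
  rw [← coe_inj, coe_pair, coe_pair, Set.pair_eq_pair_iff]

theorem card_inter_pair_eq_one {s : Finset α} {a b : α} (ha : a ∈ s) (hb : b ∉ s) :
    #(s ∩ {a, b}) = 1 := by
  rw [inter_comm, insert_inter_of_mem ha, singleton_inter_of_notMem hb, insert_empty,
    card_singleton]

theorem exists_eq_pair_of_card_inter_eq_one {s t : Finset α} (ht : #t = 2)
    (hst : #(s ∩ t) = 1) : ∃ a ∈ s, ∃ b ∉ s, t = {a, b} := by
  obtain ⟨x, y, hxy, rfl⟩ := card_eq_two.mp ht
  by_cases hx : x ∈ s <;> by_cases hy : y ∈ s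
  · rw [inter_eq_right.mpr (by simp [insert_subset_iff, hx, hy]), card_pair hxy] at hst
    omega
  · exact ⟨x, hx, y, hy, rfl⟩
  · exact ⟨y, hy, x, hx, pair_comm x y⟩
  · rw [disjoint_iff_inter_eq_empty.mp (by simp [disjoint_insert_right, hx, hy])] at hst
    simp at hst

theorem card_filter_powersetCard_two_card_inter_eq_one [Fintype α] (s : Finset α) :
    #{t ∈ powersetCard 2 univ | #(s ∩ t) = 1} = #s * (Fintype.card α - #s) := by
  rw [← card_compl, ← card_product]
  symm
  refine card_nbij (fun x => {x.1, x.2}) ?_ ?_ ?_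
  · rintro ⟨a, b⟩ hab
    simp only [coe_product, Set.mem_prod, mem_coe, mem_compl] at hab
    have hne : a ≠ b := fun h => hab.2 (h ▸ hab.1)
    simp [card_pair hne, card_inter_pair_eq_one hab.1 hab.2]
  · rintro ⟨a, b⟩ hab ⟨a', b'⟩ hab' h
    simp only [coe_product, Set.mem_prod, mem_coe, mem_compl] at hab hab'
    obtain ⟨rfl, rfl⟩ | ⟨rfl, rfl⟩ := pair_eq_pair_iff.mp h
    · rfl
    · exact absurd hab.1 hab'.2
  · intro t ht
    simp only [coe_filter, mem_powersetCard, subset_univ, true_and, Set.mem_ofPred_eq] at ht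
    obtain ⟨a, ha, b, hb, rfl⟩ := exists_eq_pair_of_card_inter_eq_one ht.1 ht.2
    exact ⟨(a, b), by simp [ha, hb], rfl⟩

end TwoSubsets

namespace PairIdx

variable {N : ℕ}

def toFinset (q : PairIdx N) : Finset (Fin N) := {q.val.1, q.val.2}

theorem card_toFinset (q : PairIdx N) : #q.toFinset = 2 := card_pair q.2.ne

theorem toFinset_injective : Function.Injective (toFinset (N := N)) := by
  rintro ⟨⟨i, j⟩, hij⟩ ⟨⟨k, l⟩, hkl⟩ h
  obtain ⟨rfl, rfl⟩ | ⟨rfl, rfl⟩ := pair_eq_pair_iff.mp h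
  · rfl
  · exact absurd (hij.trans hkl) (lt_irrefl _)

theorem image_toFinset_univ :
    univ.image toFinset = powersetCard 2 (univ : Finset (Fin N)) := by
  ext t
  simp only [mem_image, mem_univ, true_and, mem_powersetCard, subset_univ]
  constructor
  · rintro ⟨q, rfl⟩
    exact q.card_toFinset
  · intro ht
    obtain ⟨x, y, hxy, rfl⟩ := card_eq_two.mp ht
    rcases hxy.lt_or_gt with h | h
    · exact ⟨⟨(x, y), h⟩, rfl⟩
    · exact ⟨⟨(y, x), h⟩, pair_comm y x⟩

theorem card_eq_choose_two : Fintype.card (PairIdx N) = N.choose 2 := by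
  rw [← card_univ, ← card_image_of_injective _ toFinset_injective, image_toFinset_univ,
    card_powersetCard, card_univ, Fintype.card_fin]

theorem card_filter_toFinset (P : Finset (Fin N) → Prop) [DecidablePred P] :
    #{q : PairIdx N | P q.toFinset} = #{t ∈ powersetCard 2 univ | P t} := by
  rw [← card_image_of_injective _ toFinset_injective, ← filter_image, image_toFinset_univ]

theorem card_filter_card_inter_toFinset_eq_one (p : PairIdx N) :
    #{q : PairIdx N | #(p.toFinset ∩ q.toFinset) = 1} = 2 * (N - 2) := by
  rw [card_filter_toFinset (fun t => #(p.toFinset ∩ t) = 1),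
    card_filter_powersetCard_two_card_inter_eq_one, p.card_toFinset, Fintype.card_fin]

end PairIdx

theorem kronecker_mulVec_comp_snd {R l m n p : Type*} [CommSemiring R] [Fintype m] [Fintype p]
    (A : Matrix l m R) (B : Matrix n p R) (f : p → R) :
    (A ⊗ₖ B) *ᵥ (fun v => f v.2) = fun v => (A *ᵥ 1) v.1 * (B *ᵥ f) v.2 := by
  ext v
  simp only [mulVec, dotProduct, Fintype.sum_prod_type, kroneckerMap_apply, Pi.one_apply,
    mul_one, sum_mul_sum, mul_assoc]

theorem dotProduct_comp_snd {R ι κ : Type*} [NonUnitalNonAssocSemiring R] [Fintype ι]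
    [Fintype κ] (f g : κ → R) :
    (fun v : ι × κ => f v.2) ⬝ᵥ (fun v => g v.2) = Fintype.card ι • (f ⬝ᵥ g) := by
  simp only [dotProduct, Fintype.sum_prod_type, sum_const, card_univ]

def signMatrix (κ R : Type*) [DecidableEq κ] [One R] [Neg R] : Matrix κ κ R :=
  of fun m n => if m = n then 1 else -1

/-- `signMatrix = 2 • 1 - (all ones)`, and the all-ones matrix kills sum-zero vectors. -/
theorem signMatrix_mulVec_of_sum_eq_zero {R κ : Type*} [Ring R] [Fintype κ] [DecidableEq κ]
    (f : κ → R) (hf : ∑ n, f n = 0) : signMatrix κ R *ᵥ f = 2 • f := by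
  ext m
  calc (signMatrix κ R *ᵥ f) m = ∑ n, ((if m = n then 2 * f n else 0) - f n) := by
        refine sum_congr rfl fun n _ => ?_
        by_cases h : m = n <;> simp [signMatrix, h, two_mul]
    _ = (2 • f) m := by
        rw [sum_sub_distrib, sum_ite_eq, hf]
        simp [two_mul]

def sharesOnePointMatrix (N : ℕ) : Matrix (PairIdx N) (PairIdx N) ℝ :=
  of fun p q => if #(p.toFinset ∩ q.toFinset) = 1 then 1 else 0

theorem sharesOnePointMatrix_mulVec_one (N : ℕ) :
    sharesOnePointMatrix N *ᵥ 1 = fun _ => 2 * ((N : ℝ) - 2) := by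
  ext p
  have hN : 2 ≤ N := by have := p.2; omega
  simp only [mulVec, dotProduct, sharesOnePointMatrix, of_apply, Pi.one_apply, mul_one]
  rw [sum_boole, PairIdx.card_filter_card_inter_toFinset_eq_one]
  push_cast [Nat.cast_sub hN]
  ring

theorem omegaMat_eq_kronecker (N : ℕ) :
    OmegaMat N = sharesOnePointMatrix N ⊗ₖ signMatrix (Fin 3) ℝ := by
  ext v w
  simp only [OmegaMat, sharesOnePointMatrix, PairIdx.toFinset, signMatrix, kroneckerMap_apply,
    of_apply]
  split_ifs <;> simp_all

theorem omegaMat_mulVec_of_sum_eq_zero (N : ℕ) (f : Fin 3 → ℝ) (hf : ∑ n, f n = 0) :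
    OmegaMat N *ᵥ (fun v => f v.2) = (4 * ((N : ℝ) - 2)) • fun v => f v.2 := by
  rw [omegaMat_eq_kronecker, kronecker_mulVec_comp_snd, sharesOnePointMatrix_mulVec_one,
    signMatrix_mulVec_of_sum_eq_zero f hf]
  ext v
  simp only [Pi.smul_apply, smul_eq_mul]
  ring

/-- With `α = (2·C(N,2))^{-1/2}` and `β = (6·C(N,2))^{-1/2}`, the vectors `u_α` (taking values
`α, 0, -α` on colors 1,2,3) and `u_β` (taking values `β, -2β, β`) are orthogonal unit
eigenvectors of `Ω` for the eigenvalue `4(N-2)`. -/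
theorem omegaMat_ualpha_ubeta_eigenvectors (N : ℕ) (hN : 2 ≤ N) :
    letI α : ℝ := (Real.sqrt (2 * N.choose 2))⁻¹
    letI β : ℝ := (Real.sqrt (6 * N.choose 2))⁻¹
    letI uα : PairIdx N × Fin 3 → ℝ := fun v => ![α, 0, -α] v.2
    letI uβ : PairIdx N × Fin 3 → ℝ := fun v => ![β, -2 * β, β] v.2
    (OmegaMat N).mulVec uα = (4 * ((N : ℝ) - 2)) • uα ∧
    (OmegaMat N).mulVec uβ = (4 * ((N : ℝ) - 2)) • uβ ∧
    uα ⬝ᵥ uβ = 0 ∧ uα ⬝ᵥ uα = 1 ∧ uβ ⬝ᵥ uβ = 1 := by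
  set α : ℝ := (Real.sqrt (2 * N.choose 2))⁻¹
  set β : ℝ := (Real.sqrt (6 * N.choose 2))⁻¹
  have hC : (0 : ℝ) < N.choose 2 := mod_cast Nat.choose_pos hN
  have hα : α * α = (2 * (N.choose 2 : ℝ))⁻¹ := by
    rw [← mul_inv, Real.mul_self_sqrt (by positivity)]
  have hβ : β * β = (6 * (N.choose 2 : ℝ))⁻¹ := by
    rw [← mul_inv, Real.mul_self_sqrt (by positivity)]
  refine ⟨omegaMat_mulVec_of_sum_eq_zero N _ (by simp [Fin.sum_univ_three]),
    omegaMat_mulVec_of_sum_eq_zero N _ (by simp [Fin.sum_univ_three]; ring), ?_, ?_, ?_⟩ <;>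
  simp only [dotProduct_comp_snd, PairIdx.card_eq_choose_two, nsmul_eq_mul,
    cons_dotProduct_cons, dotProduct_of_isEmpty]
  · ring
  · rw [show α * α + (0 * 0 + (-α * -α + 0)) = 2 * (α * α) by ring, hα]
    field_simp
  · rw [show β * β + (-2 * β * (-2 * β) + (β * β + 0)) = 6 * (β * β) by ring, hβ]
    field_simp
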